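/- Let (B, 𝔼, 𝔰) be an extriangulated category and let A ↣ B ↠ C be an 𝔼-triangle realizing δ ∈ 𝔼(C, A). Then for every object Y of B, the sequence B(Y,A) → B(Y,B) → B(Y,C) → 𝔼(Y,A) → 𝔼(Y,B) → 𝔼(Y,C), where the first two maps are postcomposition with the inflation and deflation, the middle map sends g to g^*δ, and the last two maps are 𝔼 applied covariantly, is exact. -/

import Mathlib

open CategoryTheory Category Limits Opposite ZeroObject

universe v u

namespace ExtStmt

variable (B : Type u) [Category.{v} B] [Preadditive B] [HasZeroObject B] [HasBinaryBiproducts B]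

/-- An extriangulated category structure on an additive category `B`,
following Nakaoka–Palu. `E` is the biadditive extension bifunctor, and `Real δ X a b`
expresses that the sequence `A ⟶ X ⟶ C` (given by `a`, `b`) belongs to the equivalence
class `𝔰(δ)`, i.e. realizes the extension `δ ∈ 𝔼(C, A)`. -/
structure Extriangulated where
  /-- The extension bifunctor `𝔼 : Bᵒᵖ × B ⥤ Ab`. -/
  E : Bᵒᵖ ⥤ B ⥤ AddCommGrpCat.{v}
  /-- `𝔼(C, -)` is additive. -/
  addE₁ : ∀ C : Bᵒᵖ, (E.obj C).Additive
  /-- `𝔼(-, A)` is additive. -/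
  addE₂ : ∀ A : B, (E.flip.obj A).Additive
  /-- The realization: `Real δ X a b` means `A ⟶ X ⟶ C` realizes `δ ∈ 𝔼(C, A)`. -/
  Real : ∀ {A C : B}, ((E.obj (op C)).obj A) → ∀ (X : B), (A ⟶ X) → (X ⟶ C) → Prop
  /-- Every extension is realized by some sequence. -/
  real_ex : ∀ {A C : B} (δ : (E.obj (op C)).obj A),
    ∃ (X : B) (a : A ⟶ X) (b : X ⟶ C), Real δ X a b
  /-- `𝔰(δ)` is closed under the equivalence of sequences. -/
  real_iso : ∀ {A C X X' : B} (δ : (E.obj (op C)).obj A) (a : A ⟶ X) (b : X ⟶ C) (i : X ≅ X'),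
    Real δ X a b → Real δ X' (a ≫ i.hom) (i.inv ≫ b)
  /-- Any two realizations of `δ` are equivalent sequences. -/
  real_unique : ∀ {A C X X' : B} (δ : (E.obj (op C)).obj A) (a : A ⟶ X) (b : X ⟶ C)
    (a' : A ⟶ X') (b' : X' ⟶ C), Real δ X a b → Real δ X' a' b' →
    ∃ i : X ≅ X', a ≫ i.hom = a' ∧ i.hom ≫ b' = b
  /-- Realization of morphisms of extensions: if `f_*δ = h^*δ'` then the pair `(f, h)` is
  realized by some `(f, g, h)`. -/
  real_mor : ∀ {A C A' C' X X' : B} (δ : (E.obj (op C)).obj A) (δ' : (E.obj (op C')).obj A')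
    (f : A ⟶ A') (h : C ⟶ C') (a : A ⟶ X) (b : X ⟶ C) (a' : A' ⟶ X') (b' : X' ⟶ C'),
    Real δ X a b → Real δ' X' a' b' →
    ((E.obj (op C)).map f) δ = ((E.map h.op).app A') δ' →
    ∃ g : X ⟶ X', a ≫ g = f ≫ a' ∧ g ≫ b' = b ≫ h
  /-- Additivity of the realization: `0` is realized by the split sequence. -/
  real_zero : ∀ (A C : B),
    Real (0 : (E.obj (op C)).obj A) (A ⊞ C) biprod.inl biprod.snd
  /-- Additivity of the realization: direct sums. -/
  real_sum : ∀ {A C A' C' X X' : B} (δ : (E.obj (op C)).obj A) (δ' : (E.obj (op C')).obj A')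
    (a : A ⟶ X) (b : X ⟶ C) (a' : A' ⟶ X') (b' : X' ⟶ C'),
    Real δ X a b → Real δ' X' a' b' →
    Real (((E.map (biprod.fst : C ⊞ C' ⟶ C).op).app (A ⊞ A'))
            (((E.obj (op C)).map (biprod.inl : A ⟶ A ⊞ A')) δ)
          + ((E.map (biprod.snd : C ⊞ C' ⟶ C').op).app (A ⊞ A'))
            (((E.obj (op C')).map (biprod.inr : A' ⟶ A ⊞ A')) δ'))
      (X ⊞ X') (biprod.map a a') (biprod.map b b')
  /-- Axiom (ET3). -/
  et3 : ∀ {A C A' C' X X' : B} (δ : (E.obj (op C)).obj A) (δ' : (E.obj (op C')).obj A')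
    (a : A ⟶ X) (b : X ⟶ C) (a' : A' ⟶ X') (b' : X' ⟶ C') (f : A ⟶ A') (g : X ⟶ X'),
    Real δ X a b → Real δ' X' a' b' → a ≫ g = f ≫ a' →
    ∃ h : C ⟶ C', g ≫ b' = b ≫ h ∧ ((E.obj (op C)).map f) δ = ((E.map h.op).app A') δ'
  /-- Axiom (ET3ᵒᵖ). -/
  et3op : ∀ {A C A' C' X X' : B} (δ : (E.obj (op C)).obj A) (δ' : (E.obj (op C')).obj A')
    (a : A ⟶ X) (b : X ⟶ C) (a' : A' ⟶ X') (b' : X' ⟶ C') (g : X ⟶ X') (h : C ⟶ C'),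
    Real δ X a b → Real δ' X' a' b' → g ≫ b' = b ≫ h →
    ∃ f : A ⟶ A', a ≫ g = f ≫ a' ∧ ((E.obj (op C)).map f) δ = ((E.map h.op).app A') δ'
  /-- Axiom (ET4). -/
  et4 : ∀ {A B₀ D C₀ F : B} (δ : (E.obj (op D)).obj A) (δ' : (E.obj (op F)).obj B₀)
    (a : A ⟶ B₀) (a' : B₀ ⟶ D) (bb : B₀ ⟶ C₀) (b' : C₀ ⟶ F),
    Real δ B₀ a a' → Real δ' C₀ bb b' →
    ∃ (E₀ : B) (c' : C₀ ⟶ E₀) (δ'' : (E.obj (op E₀)).obj A) (d : D ⟶ E₀) (e : E₀ ⟶ F),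
      Real δ'' C₀ (a ≫ bb) c' ∧
      Real (((E.obj (op F)).map a') δ') E₀ d e ∧
      a' ≫ d = bb ≫ c' ∧ c' ≫ e = b' ∧
      ((E.map d.op).app A) δ'' = δ ∧
      ((E.obj (op E₀)).map a) δ'' = ((E.map e.op).app B₀) δ'
  /-- Axiom (ET4ᵒᵖ). -/
  et4op : ∀ {A C₀ E₀ D F : B} (δ'' : (E.obj (op E₀)).obj A) (θ : (E.obj (op F)).obj D)
    (c : A ⟶ C₀) (c' : C₀ ⟶ E₀) (d : D ⟶ E₀) (e : E₀ ⟶ F),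
    Real δ'' C₀ c c' → Real θ E₀ d e →
    ∃ (B₀ : B) (a : A ⟶ B₀) (a' : B₀ ⟶ D) (bb : B₀ ⟶ C₀)
      (δ : (E.obj (op D)).obj A) (δ' : (E.obj (op F)).obj B₀),
      Real δ B₀ a a' ∧ Real δ' C₀ bb (c' ≫ e) ∧
      a ≫ bb = c ∧ a' ≫ d = bb ≫ c' ∧
      θ = ((E.obj (op F)).map a') δ' ∧
      ((E.map d.op).app A) δ'' = δ ∧
      ((E.obj (op E₀)).map a) δ'' = ((E.map e.op).app B₀) δ'

variable {B}

/-- The group of extensions `𝔼(C, A)`. -/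
abbrev Extriangulated.Ext (T : Extriangulated B) (C A : B) : Type v :=
  (T.E.obj (op C)).obj A

/-- `f_*δ`, the pushforward of an extension along `f : A ⟶ A'`. -/
abbrev Extriangulated.push (T : Extriangulated B) {C A A' : B} (f : A ⟶ A')
    (δ : T.Ext C A) : T.Ext C A' :=
  ((T.E.obj (op C)).map f) δ

/-- `g^*δ`, the pullback of an extension along `g : C ⟶ C'`. -/
abbrev Extriangulated.pull (T : Extriangulated B) {C C' A : B} (g : C ⟶ C')
    (δ : T.Ext C' A) : T.Ext C A :=
  ((T.E.map g.op).app A) δ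

/-- A pair of composable morphisms is a conflation if it realizes some extension. -/
def Extriangulated.IsConflation (T : Extriangulated B) {A X C : B}
    (a : A ⟶ X) (b : X ⟶ C) : Prop :=
  ∃ δ : T.Ext C A, T.Real δ X a b


set_option linter.unusedSectionVars false

section Hearts

variable {B : Type u} [Category.{v} B] [Preadditive B] [HasZeroObject B] [HasBinaryBiproducts B]

def wRel (Wp : B → Prop) (P : B → Prop) : HomRel (ObjectProperty.FullSubcategory P) :=
  fun {X Y} f g =>
    ∃ (Wo : B) (_ : Wp Wo) (p : X.obj ⟶ Wo) (q : Wo ⟶ Y.obj), p ≫ q = (f - g).hom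

abbrev HeartCat (Wp : B → Prop) (P : B → Prop) := CategoryTheory.Quotient (wRel Wp P)

theorem wRel_congruence (Wp P : B → Prop) (hW0 : Wp (0 : B))
    (hWbi : ∀ {X Y : B}, Wp X → Wp Y → Wp (X ⊞ Y)) : Congruence (wRel Wp P) where
  equivalence := by
    refine fun {X Y} => ⟨?_, ?_, ?_⟩
    · intro f
      exact ⟨0, hW0, 0, 0, by rw [sub_self]; simp⟩
    · rintro f g ⟨Wo, hw, p, q, h⟩
      exact ⟨Wo, hw, -p, q, by
        rw [Preadditive.neg_comp, h]; change -(f.hom - g.hom) = g.hom - f.hom; abel⟩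
    · rintro f g h ⟨W₁, hw₁, p₁, q₁, h₁⟩ ⟨W₂, hw₂, p₂, q₂, h₂⟩
      exact ⟨W₁ ⊞ W₂, hWbi hw₁ hw₂, biprod.lift p₁ p₂, biprod.desc q₁ q₂, by
        rw [biprod.lift_desc, h₁, h₂]
        change (f.hom - g.hom) + (g.hom - h.hom) = f.hom - h.hom; abel⟩
  comp_left := by
    rintro X Y Z f g g' ⟨Wo, hw, p, q, h⟩
    exact ⟨Wo, hw, f.hom ≫ p, q, by
      rw [Category.assoc, h]; change f.hom ≫ (g.hom - g'.hom) = f.hom ≫ g.hom - f.hom ≫ g'.hom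
      rw [Preadditive.comp_sub]⟩
  comp_right := by
    rintro X Y Z f f' g ⟨Wo, hw, p, q, h⟩
    exact ⟨Wo, hw, p, q ≫ g.hom, by
      rw [← Category.assoc, h]; change (f.hom - f'.hom) ≫ g.hom = f.hom ≫ g.hom - f'.hom ≫ g.hom
      rw [Preadditive.sub_comp]⟩

theorem wRel_add (Wp P : B → Prop)
    (hWbi : ∀ {X Y : B}, Wp X → Wp Y → Wp (X ⊞ Y)) :
    ∀ ⦃X Y : ObjectProperty.FullSubcategory P⦄ (f₁ f₂ g₁ g₂ : X ⟶ Y) (_ : wRel Wp P f₁ f₂)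
      (_ : wRel Wp P g₁ g₂), wRel Wp P (f₁ + g₁) (f₂ + g₂) := by
  rintro X Y f₁ f₂ g₁ g₂ ⟨W₁, hw₁, p₁, q₁, h₁⟩ ⟨W₂, hw₂, p₂, q₂, h₂⟩
  exact ⟨W₁ ⊞ W₂, hWbi hw₁ hw₂, biprod.lift p₁ p₂, biprod.desc q₁ q₂, by
    rw [biprod.lift_desc, h₁, h₂]
    change (f₁.hom - f₂.hom) + (g₁.hom - g₂.hom) = (f₁.hom + g₁.hom) - (f₂.hom + g₂.hom); abel⟩

/-- The heart is preadditive. -/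
def heartPreadditive (Wp P : B → Prop) (hW0 : Wp (0 : B))
    (hWbi : ∀ {X Y : B}, Wp X → Wp Y → Wp (X ⊞ Y)) : Preadditive (HeartCat Wp P) :=
  letI := wRel_congruence Wp P hW0 hWbi
  Quotient.preadditive _ (wRel_add Wp P hWbi)

/-- The heart has zero morphisms. -/
def heartZeroMorphisms (Wp P : B → Prop) (hW0 : Wp (0 : B))
    (hWbi : ∀ {X Y : B}, Wp X → Wp Y → Wp (X ⊞ Y)) : HasZeroMorphisms (HeartCat Wp P) :=
  letI := heartPreadditive Wp P hW0 hWbi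
  inferInstance

/-- A full additive subcategory closed under direct summands and isomorphisms. -/
structure IsGoodSubcat (P : B → Prop) : Prop where
  mem_of_iso : ∀ {X Y : B}, (X ≅ Y) → P X → P Y
  zero_mem : P (0 : B)
  biprod_mem : ∀ {X Y : B}, P X → P Y → P (X ⊞ Y)
  summand_mem : ∀ {X Y : B}, P (X ⊞ Y) → P X

/-- `(U, V)` is a cotorsion pair on the extriangulated category `(B, 𝔼, 𝔰)`. -/
structure IsCotorsionPair (T : Extriangulated B) (U V : B → Prop) : Prop where
  subU : IsGoodSubcat U
  subV : IsGoodSubcat V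
  ext_vanish : ∀ {u v : B}, U u → V v → ∀ δ : T.Ext u v, δ = 0
  cone : ∀ X : B, ∃ (v u : B) (f : v ⟶ u) (g : u ⟶ X), V v ∧ U u ∧ T.IsConflation f g
  cocone : ∀ X : B, ∃ (v u : B) (f : X ⟶ v) (g : v ⟶ u), V v ∧ U u ∧ T.IsConflation f g

/-- `((S,Tc),(U,V))` is a twin cotorsion pair: two cotorsion pairs with `𝔼(S, V) = 0`. -/
def IsTwinCotorsionPair (T : Extriangulated B) (S Tc U V : B → Prop) : Prop :=
  IsCotorsionPair T S Tc ∧ IsCotorsionPair T U V ∧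
    ∀ {s v : B}, S s → V v → ∀ δ : T.Ext s v, δ = 0

/-- Projective object of an extriangulated category. -/
def IsProjObj (T : Extriangulated B) (P : B) : Prop :=
  ∀ {A X C : B} (a : A ⟶ X) (b : X ⟶ C), T.IsConflation a b →
    ∀ c : P ⟶ C, ∃ d : P ⟶ X, d ≫ b = c

/-- Injective object of an extriangulated category. -/
def IsInjObj (T : Extriangulated B) (I : B) : Prop :=
  ∀ {A X C : B} (a : A ⟶ X) (b : X ⟶ C), T.IsConflation a b →
    ∀ c : A ⟶ I, ∃ d : X ⟶ I, a ≫ d = c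

/-- `B` has enough projectives. -/
def HasEnoughProj (T : Extriangulated B) : Prop :=
  ∀ C : B, ∃ (A P : B) (f : A ⟶ P) (p : P ⟶ C), IsProjObj T P ∧ T.IsConflation f p

/-- `B` has enough injectives. -/
def HasEnoughInj (T : Extriangulated B) : Prop :=
  ∀ A : B, ∃ (I C : B) (i : A ⟶ I) (p : I ⟶ C), IsInjObj T I ∧ T.IsConflation i p

/-- `W = Tc ∩ U`. -/
def Wpred (Tc U : B → Prop) : B → Prop := fun X => Tc X ∧ U X

/-- `CoCone(P, Q)`: objects `X` with a conflation `X ↣ P' ↠ Q'`, `P' ∈ P`, `Q' ∈ Q`. -/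
def CoConeOf (T : Extriangulated B) (P Q : B → Prop) : B → Prop := fun X =>
  ∃ (p q : B) (f : X ⟶ p) (g : p ⟶ q), P p ∧ Q q ∧ T.IsConflation f g

/-- `Cone(P, Q)`: objects `X` with a conflation `P' ↣ Q' ↠ X`, `P' ∈ P`, `Q' ∈ Q`. -/
def ConeOf (T : Extriangulated B) (P Q : B → Prop) : B → Prop := fun X =>
  ∃ (p q : B) (f : p ⟶ q) (g : q ⟶ X), P p ∧ Q q ∧ T.IsConflation f g

/-- `P * Q`: objects `X` with a conflation `P' ↣ X ↠ Q'`, `P' ∈ P`, `Q' ∈ Q`. -/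
def StarOf (T : Extriangulated B) (P Q : B → Prop) : B → Prop := fun X =>
  ∃ (p q : B) (f : p ⟶ X) (g : X ⟶ q), P p ∧ Q q ∧ T.IsConflation f g

/-- `B⁻ = CoCone(W, S)`. -/
def Bminus (T : Extriangulated B) (S Tc U : B → Prop) : B → Prop :=
  CoConeOf T (Wpred Tc U) S

/-- `B⁺ = Cone(V, W)`. -/
def Bplus (T : Extriangulated B) (Tc U V : B → Prop) : B → Prop :=
  ConeOf T V (Wpred Tc U)

/-- `H = B⁻ ∩ B⁺`, the objects of the heart. -/
def HeartPred (T : Extriangulated B) (S Tc U V : B → Prop) : B → Prop := fun X =>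
  Bminus T S Tc U X ∧ Bplus T Tc U V X

/-- The heart `H̄ = H/[W]` of a twin cotorsion pair. -/
abbrev TwinHeart (T : Extriangulated B) (S Tc U V : B → Prop) :=
  HeartCat (Wpred Tc U) (HeartPred T S Tc U V)

/-- Zero morphisms on the heart of a twin cotorsion pair. -/
def heartZeroOfTwin (T : Extriangulated B) {S Tc U V : B → Prop}
    (h : IsTwinCotorsionPair T S Tc U V) (P : B → Prop) :
    HasZeroMorphisms (HeartCat (Wpred Tc U) P) :=
  heartZeroMorphisms _ _ ⟨h.1.subV.zero_mem, h.2.1.subU.zero_mem⟩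
    (fun hx hy => ⟨h.1.subV.biprod_mem hx.1 hy.1, h.2.1.subU.biprod_mem hx.2 hy.2⟩)

end Hearts


/-! Each exactness statement is one realization axiom applied against a split 𝔼-triangle
realizing `0`: (ET3ᵒᵖ) at `B(Y, B)`, realization of morphisms at `B(Y, C)` and `𝔼(Y, A)`, and
(ET4) at `𝔼(Y, B)`, where the vanishing of `b_*ε` makes a deflation split. -/

namespace Extriangulated

variable {B : Type u} [Category.{v} B] [Preadditive B] [HasZeroObject B]
  [HasBinaryBiproducts B] {T : Extriangulated B}

section Functoriality

variable (T)

lemma pull_comp {C C' C'' A : B} (f : C ⟶ C') (g : C' ⟶ C'') (δ : T.Ext C'' A) :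
    T.pull (f ≫ g) δ = T.pull f (T.pull g δ) := by
  simp only [pull, op_comp, T.E.map_comp, NatTrans.comp_app, AddCommGrpCat.coe_comp,
    Function.comp_apply]

lemma push_comp {C A A' A'' : B} (f : A ⟶ A') (g : A' ⟶ A'') (δ : T.Ext C A) :
    T.push (f ≫ g) δ = T.push g (T.push f δ) := by
  simp only [push, Functor.map_comp, AddCommGrpCat.coe_comp, Function.comp_apply]

@[simp]
lemma pull_id {C A : B} (δ : T.Ext C A) : T.pull (𝟙 C) δ = δ := by
  simp only [pull, op_id, CategoryTheory.Functor.map_id, NatTrans.id_app, AddCommGrpCat.id_apply]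

@[simp]
lemma push_id {C A : B} (δ : T.Ext C A) : T.push (𝟙 A) δ = δ := by
  simp only [push, CategoryTheory.Functor.map_id, AddCommGrpCat.id_apply]

lemma pull_zero {C C' A : B} (g : C ⟶ C') : T.pull g (0 : T.Ext C' A) = 0 :=
  map_zero _

lemma push_zero_hom {C A A' : B} (δ : T.Ext C A) : T.push (0 : A ⟶ A') δ = 0 := by
  have := T.addE₁ (op C)
  simp only [push, Functor.map_zero, AddCommGrpCat.hom_zero, AddMonoidHom.zero_apply]

lemma push_pull {C C' A A' : B} (f : A ⟶ A') (g : C ⟶ C') (δ : T.Ext C' A) :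
    T.push f (T.pull g δ) = T.pull g (T.push f δ) :=
  (congrArg (fun φ => φ δ) ((T.E.map g.op).naturality f)).symm

end Functoriality

lemma real_id_zero (Y : B) : T.Real (0 : T.Ext 0 Y) Y (𝟙 Y) 0 := by
  simpa using T.real_iso 0 biprod.inl biprod.snd (isoBiprodZero (isZero_zero B)).symm
    (T.real_zero Y 0)

lemma real_of_eq_zero {A C : B} {δ : T.Ext C A} (hδ : δ = 0) :
    T.Real δ (A ⊞ C) biprod.inl biprod.snd :=
  hδ ▸ T.real_zero A C

namespace Real

variable {A C X : B} {δ : T.Ext C A} {a : A ⟶ X} {b : X ⟶ C}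

lemma comp_eq_zero (h : T.Real δ X a b) : a ≫ b = 0 := by
  obtain ⟨c, hc, -⟩ := T.et3 0 δ biprod.inl biprod.snd a b (𝟙 A) (biprod.desc a (𝟙 X))
    (T.real_zero A X) h (by simp)
  simpa using congrArg (biprod.inl ≫ ·) hc

lemma pull_self_eq_zero (h : T.Real δ X a b) : T.pull b δ = 0 := by
  obtain ⟨c, hc, hδ⟩ := T.et3 0 δ biprod.inl biprod.snd a b (𝟙 A) (biprod.desc a (𝟙 X))
    (T.real_zero A X) h (by simp)
  obtain rfl : b = c := by simpa using congrArg (biprod.inr ≫ ·) hc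
  simpa using hδ.symm

lemma push_self_eq_zero (h : T.Real δ X a b) : T.push a δ = 0 := by
  obtain ⟨f, hf, hδ⟩ := T.et3op δ 0 a b biprod.inl biprod.snd (biprod.lift (𝟙 X) b) (𝟙 C)
    h (T.real_zero X C) (by simp)
  obtain rfl : a = f := by simpa using congrArg (· ≫ biprod.fst) hf
  simpa using hδ

lemma exists_comp_eq_id_of_eq_zero (h : T.Real δ X a b) (hδ : δ = 0) :
    ∃ s : C ⟶ X, s ≫ b = 𝟙 C := by
  obtain ⟨i, -, hi⟩ := T.real_unique δ a b biprod.inl biprod.snd h (real_of_eq_zero hδ)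
  exact ⟨biprod.inr ≫ i.inv, by simp [← hi]⟩

variable {Y : B}

lemma comp_deflation_eq_zero_iff (h : T.Real δ X a b) (u : Y ⟶ X) :
    u ≫ b = 0 ↔ ∃ w : Y ⟶ A, u = w ≫ a := by
  constructor
  · intro hu
    obtain ⟨w, hw, -⟩ := T.et3op 0 δ (𝟙 Y) 0 a b u 0 (real_id_zero Y) h (by simp [hu])
    exact ⟨w, by simpa using hw⟩
  · rintro ⟨w, rfl⟩
    rw [assoc, h.comp_eq_zero, comp_zero]

lemma pull_eq_zero_iff (h : T.Real δ X a b) (g : Y ⟶ C) :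
    T.pull g δ = 0 ↔ ∃ u : Y ⟶ X, g = u ≫ b := by
  constructor
  · intro hg
    obtain ⟨m, -, hm⟩ := T.real_mor (T.pull g δ) δ (𝟙 A) g biprod.inl biprod.snd a b
      (real_of_eq_zero hg) h (T.push_id _)
    exact ⟨biprod.inr ≫ m, by simpa using (congrArg (biprod.inr ≫ ·) hm).symm⟩
  · rintro ⟨u, rfl⟩
    rw [pull_comp, h.pull_self_eq_zero, pull_zero]

lemma push_inflation_eq_zero_iff (h : T.Real δ X a b) (ε : T.Ext Y A) :
    T.push a ε = 0 ↔ ∃ g : Y ⟶ C, ε = T.pull g δ := by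
  constructor
  · intro hε
    obtain ⟨M, s, t, hst⟩ := T.real_ex ε
    obtain ⟨m, hm, -⟩ := T.real_mor ε (T.push a ε) a (𝟙 Y) s t biprod.inl biprod.snd
      hst (real_of_eq_zero hε) (T.pull_id _).symm
    obtain ⟨g, -, hg⟩ := T.et3 ε δ s t a b (𝟙 A) (m ≫ biprod.fst) hst h
      (by rw [← assoc, hm]; simp)
    exact ⟨g, by simpa using hg⟩
  · rintro ⟨g, rfl⟩
    rw [push_pull, h.push_self_eq_zero, pull_zero]

lemma push_deflation_eq_zero_iff (h : T.Real δ X a b) (ε : T.Ext Y X) :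
    T.push b ε = 0 ↔ ∃ ε' : T.Ext Y A, ε = T.push a ε' := by
  constructor
  · intro hε
    obtain ⟨M, s, t, hst⟩ := T.real_ex ε
    obtain ⟨E₀, -, θ, d, e, -, hde, -, -, -, hθ⟩ := T.et4 δ ε a b s t h hst
    obtain ⟨j, hj⟩ := hde.exists_comp_eq_id_of_eq_zero hε
    change T.push a θ = T.pull e ε at hθ
    refine ⟨T.pull j θ, ?_⟩
    rw [push_pull, hθ, ← pull_comp, hj, pull_id]
  · rintro ⟨ε', rfl⟩
    rw [← push_comp, h.comp_eq_zero, push_zero_hom]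

end Real

end Extriangulated

/-- Liu–Nakaoka/Nakaoka–Palu: the covariant long exact sequence
`B(Y,A) → B(Y,B) → B(Y,C) → 𝔼(Y,A) → 𝔼(Y,B) → 𝔼(Y,C)`
associated to an 𝔼-triangle `A ↣ B ↠ C` (exactness at the four middle spots). -/
theorem stmt9 {B : Type u} [Category.{v} B] [Preadditive B] [HasZeroObject B]
    [HasBinaryBiproducts B] (T : Extriangulated B) {A C X₀ : B}
    (δ : T.Ext C A) (a : A ⟶ X₀) (b : X₀ ⟶ C) (h : T.Real δ X₀ a b) (Y : B) :
    (∀ u : Y ⟶ X₀, u ≫ b = 0 ↔ ∃ w : Y ⟶ A, u = w ≫ a) ∧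
    (∀ g : Y ⟶ C, T.pull g δ = 0 ↔ ∃ u : Y ⟶ X₀, g = u ≫ b) ∧
    (∀ ε : T.Ext Y A, T.push a ε = 0 ↔ ∃ g : Y ⟶ C, ε = T.pull g δ) ∧
    (∀ ε : T.Ext Y X₀, T.push b ε = 0 ↔ ∃ ε' : T.Ext Y A, ε = T.push a ε') :=
  ⟨h.comp_deflation_eq_zero_iff, h.pull_eq_zero_iff, h.push_inflation_eq_zero_iff,
    h.push_deflation_eq_zero_iff⟩

end ExtStmt
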